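/- Let (X, τ) be a non-compact, locally compact Hausdorff topological space. Then for every τ-compact subset K ⊆ X, the subspace topologies induced on K by τ and by the de Groot dual topology τ^G coincide. -/

import Mathlib

/-- A set is saturated if it is an intersection of open sets. -/
def IsSaturatedSet {X : Type*} (t : TopologicalSpace X) (s : Set X) : Prop :=
  ∃ F : Set (Set X), (∀ u ∈ F, t.IsOpen u) ∧ s = ⋂₀ F

/-- The de Groot dual (co-compact) topology: the topology whose closed sets are
generated by the family of all compact saturated sets used as a base for closed sets. -/
def deGrootDual {X : Type*} (t : TopologicalSpace X) : TopologicalSpace X :=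
  TopologicalSpace.generateFrom
    {v : Set X | ∃ k : Set X, @IsCompact X t k ∧ IsSaturatedSet t k ∧ v = kᶜ}

/-!
Since `τ` is Hausdorff, compact sets are closed, so `τ^G` is coarser than `τ`. Conversely,
for `U` open and `K` compact, `K \ U` is compact, hence `τ^G`-closed (every set is saturated
in a `T₁` space), and `K ∩ U` is the trace on `K` of its `τ^G`-open complement.
-/

section DeGrootDual

open scoped Topology

variable {X : Type*} [t : TopologicalSpace X]

theorem isSaturatedSet_of_t1Space [T1Space X] (s : Set X) : IsSaturatedSet t s := by
  refine ⟨(fun x => {x}ᶜ) '' sᶜ, ?_, ?_⟩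
  · rintro u ⟨x, -, rfl⟩
    exact isOpen_compl_singleton
  · ext y
    simp only [Set.sInter_image, Set.mem_iInter, Set.mem_compl_iff, Set.mem_singleton_iff]
    exact ⟨fun hy x hx hxy => hx (hxy ▸ hy), fun h => by_contra fun hy => h y hy rfl⟩

theorem isOpen_deGrootDual_compl {k : Set X} (hk : IsCompact k) (hsat : IsSaturatedSet t k) :
    IsOpen[deGrootDual t] kᶜ :=
  TopologicalSpace.isOpen_generateFrom_of_mem ⟨k, hk, hsat, rfl⟩

theorem le_deGrootDual [T2Space X] : t ≤ deGrootDual t :=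
  le_generateFrom fun _ ⟨_, hk, _, hv⟩ => hv ▸ hk.isClosed.isOpen_compl

theorem induced_deGrootDual_le_of_isCompact [T1Space X] {K : Set X} (hK : IsCompact K) :
    TopologicalSpace.induced ((↑) : K → X) (deGrootDual t) ≤
      TopologicalSpace.induced ((↑) : K → X) t := by
  rintro _ ⟨U, hU, rfl⟩
  refine ⟨(K ∩ Uᶜ)ᶜ, isOpen_deGrootDual_compl (hK.inter_right hU.isClosed_compl)
    (isSaturatedSet_of_t1Space _), ?_⟩
  ext
  simp

end DeGrootDual

theorem deGrootDual_induced_eq_on_compact_general {X : Type*} (t : TopologicalSpace X)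
    (h2 : @T2Space X t) :
    ∀ K : Set X, @IsCompact X t K →
      TopologicalSpace.induced ((↑) : K → X) (deGrootDual t) =
        TopologicalSpace.induced ((↑) : K → X) t :=
  fun _ hK => le_antisymm (induced_deGrootDual_le_of_isCompact hK) (induced_mono le_deGrootDual)

/-- For a non-compact, locally compact Hausdorff space `(X, τ)`, the subspace topologies
induced on any `τ`-compact subset `K ⊆ X` by `τ` and by the de Groot dual `τ^G` coincide. -/
theorem deGrootDual_induced_eq_on_compact {X : Type*} (t : TopologicalSpace X)
    (h2 : @T2Space X t) (hlc : @LocallyCompactSpace X t) (hnc : ¬ @CompactSpace X t) :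
    ∀ K : Set X, @IsCompact X t K →
      TopologicalSpace.induced ((↑) : K → X) (deGrootDual t) =
        TopologicalSpace.induced ((↑) : K → X) t :=
  deGrootDual_induced_eq_on_compact_general t h2
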